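/- arXiv:2402.06670 — 2 statements merged into one kernel-verified Lean document; each statement's English description precedes it below -/
import Mathlib

section
/- For real numbers l, a, b with 0 < b ≤ a and L := √(a² + b²) < l, one has S³ᴰ(l,a,b) = [2lb − 2lb·F(arcsin(a/l), arcsin(L/l), a/l) + 2ab·G(arcsin(a/l), arcsin(L/l), a/l)] + [2la − 2la·F(arcsin(b/l), arcsin(L/l), b/l) + 2ab·G(arcsin(b/l), arcsin(L/l), b/l)] − [(l²/2)·arcsin(a/l) + (3/2)·la·√(1 − a²/l²) − a²·(π/2 − arcsin(a/l))] − [(l²/2)·arcsin(b/l) + (3/2)·lb·√(1 − b²/l²) − b²·(π/2 − arcsin(b/l))] + [(l²/2)·arcsin(L/l) − (lL/2)·√(1 − L²/l²) − L²·(π/2 − arcsin(L/l))] + a·b·π·(π/2 − arcsin(L/l)). -/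
open Real MeasureTheory Filter

/-- `A(l,a) = ∫_0^π min(a, l·|cos φ|) dφ` -/
noncomputable def A2 (l a : ℝ) : ℝ := ∫ φ in (0:ℝ)..π, min a (l * |Real.cos φ|)

/-- `B(l,b) = ∫_0^π min(b, l·sin φ) dφ` -/
noncomputable def B2 (l b : ℝ) : ℝ := ∫ φ in (0:ℝ)..π, min b (l * Real.sin φ)

/-- `AB(l,a,b) = ∫_0^π min(a, l·|cos φ|)·min(b, l·sin φ) dφ` -/
noncomputable def AB2 (l a b : ℝ) : ℝ :=
  ∫ φ in (0:ℝ)..π, min a (l * |Real.cos φ|) * min b (l * Real.sin φ)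

/-- Intersection probability for the 2D Buffon–Laplace needle problem. -/
noncomputable def P2 (l a b : ℝ) : ℝ :=
  (b * A2 l a + a * B2 l b - AB2 l a b) / (π * a * b)

/-- Intersection probability for the 2D spherocylinder Buffon–Laplace problem. -/
noncomputable def P2sc (l σ a b : ℝ) : ℝ :=
  ((b - σ) * A2 l (a - σ) + (a - σ) * B2 l (b - σ) - AB2 l (a - σ) (b - σ)
    + (σ * a + σ * b - σ ^ 2) * π) / (π * a * b)

/-- `A³ᴰ(l,a) = ∫_0^{π/2} ∫_0^π min(a, l·sin ψ·|cos φ|) dφ dψ` -/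
noncomputable def A3 (l a : ℝ) : ℝ :=
  ∫ ψ in (0:ℝ)..(π/2), ∫ φ in (0:ℝ)..π, min a (l * Real.sin ψ * |Real.cos φ|)

/-- `B³ᴰ(l,b) = ∫_0^{π/2} ∫_0^π min(b, l·sin ψ·sin φ) dφ dψ` -/
noncomputable def B3 (l b : ℝ) : ℝ :=
  ∫ ψ in (0:ℝ)..(π/2), ∫ φ in (0:ℝ)..π, min b (l * Real.sin ψ * Real.sin φ)

/-- `AB³ᴰ(l,a,b) = ∫_0^{π/2} ∫_0^π min(a, l·sin ψ·|cos φ|)·min(b, l·sin ψ·sin φ) dφ dψ` -/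
noncomputable def AB3 (l a b : ℝ) : ℝ :=
  ∫ ψ in (0:ℝ)..(π/2), ∫ φ in (0:ℝ)..π,
    min a (l * Real.sin ψ * |Real.cos φ|) * min b (l * Real.sin ψ * Real.sin φ)

/-- `S³ᴰ(l,a,b) = b·A³ᴰ(l,a) + a·B³ᴰ(l,b) − AB³ᴰ(l,a,b)` -/
noncomputable def S3 (l a b : ℝ) : ℝ := b * A3 l a + a * B3 l b - AB3 l a b

/-- `F(α,β,t) = ∫_α^β √(sin²ψ − t²) dψ` -/
noncomputable def Faux (α β t : ℝ) : ℝ :=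
  ∫ ψ in α..β, Real.sqrt (Real.sin ψ ^ 2 - t ^ 2)

/-- `G(α,β,t) = ∫_α^β (π/2 − arcsin(t / sin ψ)) dψ` -/
noncomputable def Gaux (α β t : ℝ) : ℝ :=
  ∫ ψ in α..β, (π / 2 - Real.arcsin (t / Real.sin ψ))

/-!
Every integrand depends on `ψ` only through the projected length `λ = l sin ψ`, so
`S³ᴰ(l,a,b) = ∫₀^{π/2} S²ᴰ(l sin ψ, a, b) dψ` for the planar quantity
`S²ᴰ(λ,a,b) = b A(λ,a) + a B(λ,b) - AB(λ,a,b)`. On `[0, π/2]` the two minima switch at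
`φ = arcsin (b/λ)` and `φ = arccos (a/λ)`; this gives `S²ᴰ` in closed form on each of the ranges
`λ ≤ b`, `b ≤ λ ≤ a`, `a ≤ λ ≤ L`, `L ≤ λ`, and on the last one it is the constant `π a b`.
Splitting the `ψ`-integral at `arcsin (b/l)`, `arcsin (a/l)`, `arcsin (L/l)` and substituting
`λ = l sin ψ` turns the terms `√(λ² - t²)` and `arccos (t/λ)` into the integrands of `F` and `G`.
-/

open Set intervalIntegral

lemma integral_congr_Icc {f g : ℝ → ℝ} {p q : ℝ} (hpq : p ≤ q) (h : EqOn f g (Icc p q)) :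
    ∫ x in p..q, f x = ∫ x in p..q, g x :=
  integral_congr (by rwa [uIcc_of_le hpq])

lemma integral_zero_pi_eq_two_mul {f : ℝ → ℝ} (hf : Continuous f)
    (hsymm : ∀ x, f (π - x) = f x) :
    ∫ x in 0..π, f x = 2 * ∫ x in 0..π / 2, f x := by
  have hhalf : ∫ x in π / 2..π, f x = ∫ x in 0..π / 2, f x := by
    simpa [hsymm, sub_half] using integral_comp_sub_left f π (a := π / 2) (b := π)
  rw [← integral_add_adjacent_intervals (b := π / 2) (hf.intervalIntegrable _ _)
    (hf.intervalIntegrable _ _), hhalf]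
  ring

lemma integral_comp_abs_cos_eq_integral_comp_sin (g : ℝ → ℝ) :
    ∫ φ in 0..π, g |cos φ| = ∫ φ in 0..π, g (sin φ) := by
  have hper : Function.Periodic (fun φ => g |cos φ|) π := fun φ => by simp [cos_add_pi]
  calc ∫ φ in 0..π, g |cos φ| = ∫ φ in -(π / 2)..-(π / 2) + π, g |cos φ| := by
        simpa using hper.intervalIntegral_add_eq 0 (-(π / 2))
  _ = ∫ φ in 0..π, g |cos (φ - π / 2)| := by
        rw [integral_comp_sub_right (fun φ => g |cos φ|), zero_sub, neg_add_eq_sub]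
  _ = ∫ φ in 0..π, g (sin φ) := integral_congr_Icc pi_pos.le fun φ hφ => by
        simp only [cos_sub_pi_div_two, abs_of_nonneg (sin_nonneg_of_nonneg_of_le_pi hφ.1 hφ.2)]

-- The integrand of `G` jumps where `sin` vanishes, but it is bounded and measurable.
lemma intervalIntegrable_pi_div_two_sub_arcsin_div_sin (t p q : ℝ) :
    IntervalIntegrable (fun ψ => π / 2 - arcsin (t / sin ψ)) volume p q := by
  refine ⟨?_, ?_⟩ <;>
  · refine IntegrableOn.of_bound measure_Ioc_lt_top
      (measurable_const.sub (measurable_arcsin.comp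
        (measurable_const.div measurable_sin))).aestronglyMeasurable π (ae_of_all _ fun ψ => ?_)
    rw [Real.norm_eq_abs, abs_le]
    constructor <;>
      linarith [arcsin_le_pi_div_two (t / sin ψ), neg_pi_div_two_le_arcsin (t / sin ψ)]

section Clipping

variable {lam t φ : ℝ}

lemma mul_sin_le_of_le_arcsin (hlam : 0 < lam) (hφ : φ ∈ Icc 0 (arcsin (t / lam))) :
    lam * sin φ ≤ t := by
  have h := (le_arcsin_iff_sin_le' ⟨by linarith [pi_pos, hφ.1],
    hφ.2.trans (arcsin_le_pi_div_two _)⟩).1 hφ.2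
  rwa [le_div_iff₀ hlam, mul_comm] at h

lemma le_mul_sin_of_arcsin_le (hlam : 0 < lam) (ht : 0 ≤ t) (htl : t ≤ lam)
    (hφ : φ ∈ Icc (arcsin (t / lam)) (π / 2)) : t ≤ lam * sin φ := by
  have h := (arcsin_le_iff_le_sin ⟨by linarith [div_nonneg ht hlam.le], (div_le_one hlam).2 htl⟩
    ⟨(neg_pi_div_two_le_arcsin _).trans hφ.1, hφ.2⟩).1 hφ.1
  rwa [div_le_iff₀ hlam, mul_comm] at h

lemma mul_cos_le_of_arccos_le (hlam : 0 < lam) (hφ : φ ∈ Icc (arccos (t / lam)) (π / 2)) :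
    lam * cos φ ≤ t := by
  rw [← sin_pi_div_two_sub]
  rw [arccos_eq_pi_div_two_sub_arcsin] at hφ
  exact mul_sin_le_of_le_arcsin hlam ⟨by linarith [hφ.2], by linarith [hφ.1]⟩

lemma le_mul_cos_of_le_arccos (hlam : 0 < lam) (ht : 0 ≤ t) (htl : t ≤ lam)
    (hφ : φ ∈ Icc 0 (arccos (t / lam))) : t ≤ lam * cos φ := by
  rw [← sin_pi_div_two_sub]
  rw [arccos_eq_pi_div_two_sub_arcsin] at hφ
  exact le_mul_sin_of_arcsin_le hlam ht htl ⟨by linarith [hφ.2], by linarith [hφ.1]⟩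

lemma mul_sqrt_one_sub_div_sq (hlam : 0 < lam) (t : ℝ) :
    lam * √(1 - (t / lam) ^ 2) = √(lam ^ 2 - t ^ 2) := by
  rw [← sqrt_sq hlam.le, ← sqrt_mul (sq_nonneg _), sqrt_sq hlam.le]
  congr 1
  field_simp

lemma sin_arcsin_div (hlam : 0 < lam) (ht : 0 ≤ t) (htl : t ≤ lam) :
    sin (arcsin (t / lam)) = t / lam :=
  sin_arcsin (by linarith [div_nonneg ht hlam.le]) ((div_le_one hlam).2 htl)

end Clipping

noncomputable def clipLoss (t lam : ℝ) : ℝ :=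
  2 * √(lam ^ 2 - t ^ 2) - 2 * t * arccos (t / lam)

lemma A2_eq_B2 (lam a : ℝ) : A2 lam a = B2 lam a :=
  integral_comp_abs_cos_eq_integral_comp_sin fun y => min a (lam * y)

lemma B2_of_le {lam t : ℝ} (h0 : 0 ≤ lam) (h : lam ≤ t) : B2 lam t = 2 * lam := by
  unfold B2
  rw [integral_congr_Icc pi_pos.le (g := fun φ => lam * sin φ) fun φ _ =>
    min_eq_right ((mul_le_of_le_one_right h0 (sin_le_one φ)).trans h)]
  simp only [intervalIntegral.integral_const_mul, integral_sin, cos_zero, cos_pi]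
  ring

lemma B2_of_ge {lam t : ℝ} (ht : 0 < t) (h : t ≤ lam) :
    B2 lam t = 2 * lam - clipLoss t lam := by
  have hlam := ht.trans_le h
  set s := arcsin (t / lam)
  have hs0 : 0 ≤ s := arcsin_nonneg.2 (div_nonneg ht.le hlam.le)
  have hs2 : s ≤ π / 2 := arcsin_le_pi_div_two _
  have hc : Continuous fun φ => min t (lam * sin φ) := by fun_prop
  unfold B2
  rw [integral_zero_pi_eq_two_mul hc fun φ => by rw [sin_pi_sub],
    ← integral_add_adjacent_intervals (b := s) (hc.intervalIntegrable _ _)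
      (hc.intervalIntegrable _ _),
    integral_congr_Icc hs0 (g := fun φ => lam * sin φ) fun φ hφ =>
      min_eq_right (mul_sin_le_of_le_arcsin hlam hφ),
    integral_congr_Icc hs2 (g := fun _ => t) fun φ hφ =>
      min_eq_left (le_mul_sin_of_arcsin_le hlam ht.le h hφ)]
  simp only [intervalIntegral.integral_const_mul, integral_sin, intervalIntegral.integral_const,
    smul_eq_mul, cos_zero, s, cos_arcsin, clipLoss, arccos_eq_pi_div_two_sub_arcsin,
    ← mul_sqrt_one_sub_div_sq hlam]
  ring

lemma AB2_eq_two_mul_integral (lam a b : ℝ) :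
    AB2 lam a b = 2 * ∫ φ in 0..π / 2, min a (lam * cos φ) * min b (lam * sin φ) := by
  unfold AB2
  rw [integral_zero_pi_eq_two_mul (by fun_prop) fun φ => by rw [cos_pi_sub, sin_pi_sub, abs_neg]]
  congr 1
  refine integral_congr_Icc (by positivity) fun φ hφ => ?_
  simp only [abs_of_nonneg (cos_nonneg_of_mem_Icc ⟨by linarith [hφ.1, pi_pos], hφ.2⟩)]

section InnerAB

variable {lam a b : ℝ}

lemma AB2_of_le (h0 : 0 ≤ lam) (ha : lam ≤ a) (hb : lam ≤ b) : AB2 lam a b = lam ^ 2 := by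
  rw [AB2_eq_two_mul_integral, integral_congr_Icc (by positivity)
    (g := fun φ => lam ^ 2 * (sin φ * cos φ)) fun φ _ => by
      rw [min_eq_right ((mul_le_of_le_one_right h0 (cos_le_one φ)).trans ha),
        min_eq_right ((mul_le_of_le_one_right h0 (sin_le_one φ)).trans hb)]
      ring]
  simp only [intervalIntegral.integral_const_mul, integral_sin_mul_cos₁, sin_pi_div_two, sin_zero]
  ring

lemma AB2_of_ge_of_le (hb : 0 < b) (hbl : b ≤ lam) (hla : lam ≤ a) :
    AB2 lam a b = 2 * b * lam - b ^ 2 := by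
  have hlam := hb.trans_le hbl
  set s := arcsin (b / lam)
  have hs0 : 0 ≤ s := arcsin_nonneg.2 (div_nonneg hb.le hlam.le)
  have hs2 : s ≤ π / 2 := arcsin_le_pi_div_two _
  have hcos : ∀ φ, min a (lam * cos φ) = lam * cos φ := fun φ =>
    min_eq_right ((mul_le_of_le_one_right hlam.le (cos_le_one φ)).trans hla)
  have hc : Continuous fun φ => min a (lam * cos φ) * min b (lam * sin φ) := by fun_prop
  rw [AB2_eq_two_mul_integral, ← integral_add_adjacent_intervals (b := s)
      (hc.intervalIntegrable _ _) (hc.intervalIntegrable _ _),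
    integral_congr_Icc hs0 (g := fun φ => lam ^ 2 * (sin φ * cos φ)) fun φ hφ => by
      rw [hcos, min_eq_right (mul_sin_le_of_le_arcsin hlam hφ)]; ring,
    integral_congr_Icc hs2 (g := fun φ => b * lam * cos φ) fun φ hφ => by
      rw [hcos, min_eq_left (le_mul_sin_of_arcsin_le hlam hb.le hbl hφ)]; ring]
  simp only [intervalIntegral.integral_const_mul, integral_sin_mul_cos₁, integral_cos,
    sin_pi_div_two, sin_zero, s, sin_arcsin_div hlam hb.le hbl]
  field_simp
  ring

lemma arccos_div_le_arcsin_div (hlam : 0 < lam) (ha : 0 ≤ a) (hb : 0 ≤ b) (hbl : b ≤ lam)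
    (h : lam ^ 2 ≤ a ^ 2 + b ^ 2) : arccos (a / lam) ≤ arcsin (b / lam) := by
  rw [le_arcsin_iff_sin_le ⟨by linarith [arccos_nonneg (a / lam), pi_pos],
      arccos_le_pi_div_two.2 (div_nonneg ha hlam.le)⟩
    ⟨by linarith [div_nonneg hb hlam.le], (div_le_one hlam).2 hbl⟩,
    sin_arccos, sqrt_le_left (div_nonneg hb hlam.le), div_pow, div_pow, sub_le_iff_le_add,
    ← add_div, one_le_div (by positivity)]
  linarith

lemma arcsin_div_le_arccos_div (hlam : 0 < lam) (ha : 0 ≤ a) (hb : 0 ≤ b)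
    (h : a ^ 2 + b ^ 2 ≤ lam ^ 2) : arcsin (b / lam) ≤ arccos (a / lam) := by
  have hbl : b ≤ lam := by nlinarith
  have hsq : (b / lam) ^ 2 ≤ 1 - (a / lam) ^ 2 := by
    rw [div_pow, div_pow, le_sub_iff_add_le, ← add_div, div_le_one (by positivity)]
    linarith
  rw [arcsin_le_iff_le_sin ⟨by linarith [div_nonneg hb hlam.le], (div_le_one hlam).2 hbl⟩
      ⟨by linarith [arccos_nonneg (a / lam), pi_pos],
        arccos_le_pi_div_two.2 (div_nonneg ha hlam.le)⟩,
    sin_arccos, le_sqrt (div_nonneg hb hlam.le) ((sq_nonneg _).trans hsq)]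
  exact hsq

lemma AB2_of_le_sq (hlam : 0 < lam) (ha : 0 ≤ a) (hb : 0 ≤ b) (hal : a ≤ lam)
    (hbl : b ≤ lam) (h : lam ^ 2 ≤ a ^ 2 + b ^ 2) :
    AB2 lam a b = 2 * (a + b) * lam - a ^ 2 - b ^ 2 - lam ^ 2 := by
  set c := arccos (a / lam)
  set s := arcsin (b / lam)
  have hc0 : 0 ≤ c := arccos_nonneg _
  have hcs : c ≤ s := arccos_div_le_arcsin_div hlam ha hb hbl h
  have hs2 : s ≤ π / 2 := arcsin_le_pi_div_two _
  have hc : Continuous fun φ => min a (lam * cos φ) * min b (lam * sin φ) := by fun_prop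
  rw [AB2_eq_two_mul_integral, ← integral_add_adjacent_intervals (b := c)
      (hc.intervalIntegrable _ _) (hc.intervalIntegrable _ _),
    ← integral_add_adjacent_intervals (a := c) (b := s)
      (hc.intervalIntegrable _ _) (hc.intervalIntegrable _ _),
    integral_congr_Icc hc0 (g := fun φ => a * lam * sin φ) fun φ hφ => by
      rw [min_eq_left (le_mul_cos_of_le_arccos hlam ha hal hφ),
        min_eq_right (mul_sin_le_of_le_arcsin hlam ⟨hφ.1, hφ.2.trans hcs⟩)]; ring,
    integral_congr_Icc hcs (g := fun φ => lam ^ 2 * (sin φ * cos φ)) fun φ hφ => by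
      rw [min_eq_right (mul_cos_le_of_arccos_le hlam ⟨hφ.1, hφ.2.trans hs2⟩),
        min_eq_right (mul_sin_le_of_le_arcsin hlam ⟨hc0.trans hφ.1, hφ.2⟩)]; ring,
    integral_congr_Icc hs2 (g := fun φ => b * lam * cos φ) fun φ hφ => by
      rw [min_eq_right (mul_cos_le_of_arccos_le hlam ⟨hcs.trans hφ.1, hφ.2⟩),
        min_eq_left (le_mul_sin_of_arcsin_le hlam hb hbl hφ)]; ring]
  have hsq : 0 ≤ 1 - (a / lam) ^ 2 := by
    rw [sub_nonneg, div_pow, div_le_one (by positivity)]; nlinarith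
  simp only [intervalIntegral.integral_const_mul, integral_sin, integral_sin_mul_cos₁,
    integral_cos, cos_zero, sin_pi_div_two, c, s, sin_arccos, sq_sqrt hsq,
    cos_arccos (by linarith [div_nonneg ha hlam.le]) ((div_le_one hlam).2 hal),
    sin_arcsin_div hlam hb hbl]
  field_simp
  ring

lemma AB2_of_sq_le (hlam : 0 < lam) (ha : 0 ≤ a) (hb : 0 ≤ b) (h : a ^ 2 + b ^ 2 ≤ lam ^ 2) :
    AB2 lam a b = 2 * (a + b) * lam - a * clipLoss b lam - b * clipLoss a lam - π * a * b := by
  have hal : a ≤ lam := by nlinarith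
  have hbl : b ≤ lam := by nlinarith
  set c := arccos (a / lam)
  set s := arcsin (b / lam)
  have hs0 : 0 ≤ s := arcsin_nonneg.2 (div_nonneg hb hlam.le)
  have hsc : s ≤ c := arcsin_div_le_arccos_div hlam ha hb h
  have hc2 : c ≤ π / 2 := arccos_le_pi_div_two.2 (div_nonneg ha hlam.le)
  have hc : Continuous fun φ => min a (lam * cos φ) * min b (lam * sin φ) := by fun_prop
  rw [AB2_eq_two_mul_integral, ← integral_add_adjacent_intervals (b := s)
      (hc.intervalIntegrable _ _) (hc.intervalIntegrable _ _),
    ← integral_add_adjacent_intervals (a := s) (b := c)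
      (hc.intervalIntegrable _ _) (hc.intervalIntegrable _ _),
    integral_congr_Icc hs0 (g := fun φ => a * lam * sin φ) fun φ hφ => by
      rw [min_eq_left (le_mul_cos_of_le_arccos hlam ha hal ⟨hφ.1, hφ.2.trans hsc⟩),
        min_eq_right (mul_sin_le_of_le_arcsin hlam hφ)]; ring,
    integral_congr_Icc hsc (g := fun _ => a * b) fun φ hφ => by
      rw [min_eq_left (le_mul_cos_of_le_arccos hlam ha hal ⟨hs0.trans hφ.1, hφ.2⟩),
        min_eq_left (le_mul_sin_of_arcsin_le hlam hb hbl ⟨hφ.1, hφ.2.trans hc2⟩)],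
    integral_congr_Icc hc2 (g := fun φ => b * lam * cos φ) fun φ hφ => by
      rw [min_eq_right (mul_cos_le_of_arccos_le hlam hφ),
        min_eq_left (le_mul_sin_of_arcsin_le hlam hb hbl ⟨hsc.trans hφ.1, hφ.2⟩)]; ring]
  simp only [intervalIntegral.integral_const_mul, integral_sin, integral_cos,
    intervalIntegral.integral_const, smul_eq_mul, cos_zero, sin_pi_div_two, c, s, sin_arccos,
    cos_pi_div_two_sub, clipLoss, ← mul_sqrt_one_sub_div_sq hlam, arcsin_eq_pi_div_two_sub_arccos]
  ring

end InnerAB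

noncomputable def S2 (l a b : ℝ) : ℝ := b * A2 l a + a * B2 l b - AB2 l a b

lemma continuous_S2 (a b : ℝ) : Continuous fun lam => S2 lam a b := by
  unfold S2 A2 B2 AB2; fun_prop

section Regimes

variable {lam a b : ℝ}

lemma S2_of_le (h0 : 0 ≤ lam) (hlb : lam ≤ b) (hba : b ≤ a) :
    S2 lam a b = 2 * (a + b) * lam - lam ^ 2 := by
  rw [S2, A2_eq_B2, B2_of_le h0 (hlb.trans hba), B2_of_le h0 hlb,
    AB2_of_le h0 (hlb.trans hba) hlb]
  ring

lemma S2_of_ge_of_le (hb : 0 < b) (hbl : b ≤ lam) (hla : lam ≤ a) :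
    S2 lam a b = 2 * a * lam + b ^ 2 - a * clipLoss b lam := by
  rw [S2, A2_eq_B2, B2_of_le (hb.le.trans hbl) hla, B2_of_ge hb hbl, AB2_of_ge_of_le hb hbl hla]
  ring

lemma S2_of_le_sq (ha : 0 < a) (hb : 0 < b) (hal : a ≤ lam) (hbl : b ≤ lam)
    (h : lam ^ 2 ≤ a ^ 2 + b ^ 2) :
    S2 lam a b = lam ^ 2 + a ^ 2 + b ^ 2 - a * clipLoss b lam - b * clipLoss a lam := by
  rw [S2, A2_eq_B2, B2_of_ge ha hal, B2_of_ge hb hbl,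
    AB2_of_le_sq (ha.trans_le hal) ha.le hb.le hal hbl h]
  ring

lemma S2_of_sq_le (h0 : 0 ≤ lam) (ha : 0 < a) (hb : 0 < b) (h : a ^ 2 + b ^ 2 ≤ lam ^ 2) :
    S2 lam a b = π * a * b := by
  have hlam : 0 < lam := by nlinarith
  rw [S2, A2_eq_B2, B2_of_ge ha (by nlinarith), B2_of_ge hb (by nlinarith),
    AB2_of_sq_le hlam ha.le hb.le h]
  ring

end Regimes

lemma S3_eq_integral_S2 (l a b : ℝ) : S3 l a b = ∫ ψ in 0..π / 2, S2 (l * sin ψ) a b := by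
  have hA : Continuous fun ψ => A2 (l * sin ψ) a := by unfold A2; fun_prop
  have hB : Continuous fun ψ => B2 (l * sin ψ) b := by unfold B2; fun_prop
  have hAB : Continuous fun ψ => AB2 (l * sin ψ) a b := by unfold AB2; fun_prop
  unfold S3 S2
  rw [intervalIntegral.integral_sub (Continuous.intervalIntegrable (by fun_prop) _ _)
      (hAB.intervalIntegrable _ _),
    intervalIntegral.integral_add (Continuous.intervalIntegrable (by fun_prop) _ _)
      (Continuous.intervalIntegrable (by fun_prop) _ _),
    intervalIntegral.integral_const_mul, intervalIntegral.integral_const_mul]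
  rfl

section ClipLoss

variable {l : ℝ}

lemma clipLoss_mul_sin (hl : 0 < l) (t ψ : ℝ) :
    clipLoss t (l * sin ψ)
      = 2 * l * √(sin ψ ^ 2 - (t / l) ^ 2) - 2 * t * (π / 2 - arcsin (t / l / sin ψ)) := by
  have hsq : (l * sin ψ) ^ 2 - t ^ 2 = l ^ 2 * (sin ψ ^ 2 - (t / l) ^ 2) := by field_simp
  rw [clipLoss, arccos_eq_pi_div_two_sub_arcsin, div_div, hsq, sqrt_mul (sq_nonneg l),
    sqrt_sq hl.le]
  ring

lemma intervalIntegrable_clipLoss_mul_sin (hl : 0 < l) (t p q : ℝ) :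
    IntervalIntegrable (fun ψ => clipLoss t (l * sin ψ)) volume p q := by
  simp only [clipLoss_mul_sin hl]
  exact (Continuous.intervalIntegrable (by fun_prop) _ _).sub
    ((intervalIntegrable_pi_div_two_sub_arcsin_div_sin _ _ _).const_mul _)

lemma integral_clipLoss_mul_sin (hl : 0 < l) (t p q : ℝ) :
    ∫ ψ in p..q, clipLoss t (l * sin ψ)
      = 2 * l * Faux p q (t / l) - 2 * t * Gaux p q (t / l) := by
  simp only [clipLoss_mul_sin hl]
  rw [intervalIntegral.integral_sub (Continuous.intervalIntegrable (by fun_prop) _ _)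
      ((intervalIntegrable_pi_div_two_sub_arcsin_div_sin _ _ _).const_mul _),
    intervalIntegral.integral_const_mul, intervalIntegral.integral_const_mul, Faux, Gaux]

end ClipLoss

lemma Faux_add (p q r t : ℝ) : Faux p q t + Faux q r t = Faux p r t :=
  integral_add_adjacent_intervals (Continuous.intervalIntegrable (by fun_prop) _ _)
    (Continuous.intervalIntegrable (by fun_prop) _ _)

lemma Gaux_add (p q r t : ℝ) : Gaux p q t + Gaux q r t = Gaux p r t :=
  integral_add_adjacent_intervals (intervalIntegrable_pi_div_two_sub_arcsin_div_sin _ _ _)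
    (intervalIntegrable_pi_div_two_sub_arcsin_div_sin _ _ _)

section Pieces

variable {l a b : ℝ}

lemma integral_S2_mul_sin_below_b (hl : 0 < l) (hb : 0 ≤ b) (hba : b ≤ a) :
    ∫ ψ in 0..arcsin (b / l), S2 (l * sin ψ) a b
      = 2 * (a + b) * l * (1 - cos (arcsin (b / l)))
        - l ^ 2 * (arcsin (b / l) - sin (arcsin (b / l)) * cos (arcsin (b / l))) / 2 := by
  have hpb : 0 ≤ arcsin (b / l) := arcsin_nonneg.2 (div_nonneg hb hl.le)
  rw [integral_congr_Icc hpb (g := fun ψ => 2 * (a + b) * l * sin ψ - l ^ 2 * sin ψ ^ 2)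
      fun ψ hψ => by
        rw [S2_of_le (mul_nonneg hl.le (sin_nonneg_of_nonneg_of_le_pi hψ.1
          (hψ.2.trans (by linarith [arcsin_le_pi_div_two (b / l), pi_pos]))))
          (mul_sin_le_of_le_arcsin hl hψ) hba]
        ring,
    intervalIntegral.integral_sub (Continuous.intervalIntegrable (by fun_prop) _ _)
      (Continuous.intervalIntegrable (by fun_prop) _ _),
    intervalIntegral.integral_const_mul, intervalIntegral.integral_const_mul, integral_sin,
    integral_sin_sq, sin_zero, cos_zero]
  ring

lemma integral_S2_mul_sin_between_b_a (hl : 0 < l) (hb : 0 < b) (hba : b ≤ a) (hbl : b ≤ l) :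
    ∫ ψ in arcsin (b / l)..arcsin (a / l), S2 (l * sin ψ) a b
      = 2 * a * l * (cos (arcsin (b / l)) - cos (arcsin (a / l)))
        + (arcsin (a / l) - arcsin (b / l)) * b ^ 2
        - a * (2 * l * Faux (arcsin (b / l)) (arcsin (a / l)) (b / l)
          - 2 * b * Gaux (arcsin (b / l)) (arcsin (a / l)) (b / l)) := by
  have hpb : 0 ≤ arcsin (b / l) := arcsin_nonneg.2 (div_nonneg hb.le hl.le)
  have hpba : arcsin (b / l) ≤ arcsin (a / l) :=
    arcsin_le_arcsin (div_le_div_of_nonneg_right hba hl.le)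
  rw [integral_congr_Icc hpba
      (g := fun ψ => 2 * a * l * sin ψ + b ^ 2 - a * clipLoss b (l * sin ψ)) fun ψ hψ => by
        rw [S2_of_ge_of_le hb (le_mul_sin_of_arcsin_le hl hb.le hbl
            ⟨hψ.1, hψ.2.trans (arcsin_le_pi_div_two _)⟩)
          (mul_sin_le_of_le_arcsin hl ⟨hpb.trans hψ.1, hψ.2⟩)]
        ring,
    intervalIntegral.integral_sub (Continuous.intervalIntegrable (by fun_prop) _ _)
      ((intervalIntegrable_clipLoss_mul_sin hl b _ _).const_mul a),
    intervalIntegral.integral_add (Continuous.intervalIntegrable (by fun_prop) _ _)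
      intervalIntegrable_const,
    intervalIntegral.integral_const_mul, intervalIntegral.integral_const_mul, integral_sin,
    intervalIntegral.integral_const, smul_eq_mul, integral_clipLoss_mul_sin hl]

lemma integral_S2_mul_sin_between_a_diag (hl : 0 < l) (hb : 0 < b) (hba : b ≤ a) (hal : a ≤ l) :
    ∫ ψ in arcsin (a / l)..arcsin (√(a ^ 2 + b ^ 2) / l), S2 (l * sin ψ) a b
      = l ^ 2 * (sin (arcsin (a / l)) * cos (arcsin (a / l))
          - sin (arcsin (√(a ^ 2 + b ^ 2) / l)) * cos (arcsin (√(a ^ 2 + b ^ 2) / l))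
          + arcsin (√(a ^ 2 + b ^ 2) / l) - arcsin (a / l)) / 2
        + (arcsin (√(a ^ 2 + b ^ 2) / l) - arcsin (a / l)) * (a ^ 2 + b ^ 2)
        - a * (2 * l * Faux (arcsin (a / l)) (arcsin (√(a ^ 2 + b ^ 2) / l)) (b / l)
          - 2 * b * Gaux (arcsin (a / l)) (arcsin (√(a ^ 2 + b ^ 2) / l)) (b / l))
        - b * (2 * l * Faux (arcsin (a / l)) (arcsin (√(a ^ 2 + b ^ 2) / l)) (a / l)
          - 2 * a * Gaux (arcsin (a / l)) (arcsin (√(a ^ 2 + b ^ 2) / l)) (a / l)) := by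
  have ha := hb.trans_le hba
  have hpa : 0 ≤ arcsin (a / l) := arcsin_nonneg.2 (div_nonneg ha.le hl.le)
  have hpaL : arcsin (a / l) ≤ arcsin (√(a ^ 2 + b ^ 2) / l) :=
    arcsin_le_arcsin (div_le_div_of_nonneg_right
      ((le_sqrt ha.le (by positivity)).2 (by nlinarith)) hl.le)
  rw [integral_congr_Icc hpaL (g := fun ψ => l ^ 2 * sin ψ ^ 2 + (a ^ 2 + b ^ 2)
      - a * clipLoss b (l * sin ψ) - b * clipLoss a (l * sin ψ)) fun ψ hψ => by
        have hal' := le_mul_sin_of_arcsin_le hl ha.le hal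
          ⟨hψ.1, hψ.2.trans (arcsin_le_pi_div_two _)⟩
        have hle := mul_sin_le_of_le_arcsin hl ⟨hpa.trans hψ.1, hψ.2⟩
        rw [S2_of_le_sq ha hb hal' (hba.trans hal') (by
          nlinarith [sq_sqrt (by positivity : 0 ≤ a ^ 2 + b ^ 2)])]
        ring,
    intervalIntegral.integral_sub ?_ ((intervalIntegrable_clipLoss_mul_sin hl a _ _).const_mul b),
    intervalIntegral.integral_sub (Continuous.intervalIntegrable (by fun_prop) _ _)
      ((intervalIntegrable_clipLoss_mul_sin hl b _ _).const_mul a),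
    intervalIntegral.integral_add (Continuous.intervalIntegrable (by fun_prop) _ _)
      intervalIntegrable_const,
    intervalIntegral.integral_const_mul, intervalIntegral.integral_const_mul,
    intervalIntegral.integral_const_mul, integral_sin_sq, intervalIntegral.integral_const,
    smul_eq_mul, integral_clipLoss_mul_sin hl, integral_clipLoss_mul_sin hl]
  · ring
  · exact (Continuous.intervalIntegrable (u := fun ψ => l ^ 2 * sin ψ ^ 2 + (a ^ 2 + b ^ 2))
      (by fun_prop) _ _).sub ((intervalIntegrable_clipLoss_mul_sin hl b _ _).const_mul a)

lemma integral_S2_mul_sin_above_diag (hl : 0 < l) (ha : 0 < a) (hb : 0 < b)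
    (hLl : √(a ^ 2 + b ^ 2) ≤ l) :
    ∫ ψ in arcsin (√(a ^ 2 + b ^ 2) / l)..π / 2, S2 (l * sin ψ) a b
      = π * a * b * (π / 2 - arcsin (√(a ^ 2 + b ^ 2) / l)) := by
  rw [integral_congr_Icc (arcsin_le_pi_div_two _) (g := fun _ => π * a * b) fun ψ hψ => by
      have hge := le_mul_sin_of_arcsin_le hl (sqrt_nonneg _) hLl hψ
      exact S2_of_sq_le ((sqrt_nonneg _).trans hge) ha hb
        (by nlinarith [sq_sqrt (by positivity : 0 ≤ a ^ 2 + b ^ 2), sqrt_nonneg (a ^ 2 + b ^ 2)]),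
    intervalIntegral.integral_const, smul_eq_mul]
  ring

end Pieces

theorem stmt18 (l a b : ℝ) (hb : 0 < b) (hba : b ≤ a)
    (hLl : Real.sqrt (a ^ 2 + b ^ 2) < l) :
    S3 l a b
      = (2 * l * b
        - 2 * l * b * Faux (Real.arcsin (a / l))
            (Real.arcsin (Real.sqrt (a ^ 2 + b ^ 2) / l)) (a / l)
        + 2 * a * b * Gaux (Real.arcsin (a / l))
            (Real.arcsin (Real.sqrt (a ^ 2 + b ^ 2) / l)) (a / l))
      + (2 * l * a
        - 2 * l * a * Faux (Real.arcsin (b / l))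
            (Real.arcsin (Real.sqrt (a ^ 2 + b ^ 2) / l)) (b / l)
        + 2 * a * b * Gaux (Real.arcsin (b / l))
            (Real.arcsin (Real.sqrt (a ^ 2 + b ^ 2) / l)) (b / l))
      - (l ^ 2 / 2 * Real.arcsin (a / l)
        + 3 / 2 * (l * a) * Real.sqrt (1 - a ^ 2 / l ^ 2)
        - a ^ 2 * (π / 2 - Real.arcsin (a / l)))
      - (l ^ 2 / 2 * Real.arcsin (b / l)
        + 3 / 2 * (l * b) * Real.sqrt (1 - b ^ 2 / l ^ 2)
        - b ^ 2 * (π / 2 - Real.arcsin (b / l)))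
      + (l ^ 2 / 2 * Real.arcsin (Real.sqrt (a ^ 2 + b ^ 2) / l)
        - l * Real.sqrt (a ^ 2 + b ^ 2) / 2
            * Real.sqrt (1 - Real.sqrt (a ^ 2 + b ^ 2) ^ 2 / l ^ 2)
        - Real.sqrt (a ^ 2 + b ^ 2) ^ 2
            * (π / 2 - Real.arcsin (Real.sqrt (a ^ 2 + b ^ 2) / l)))
      + a * b * π * (π / 2 - Real.arcsin (Real.sqrt (a ^ 2 + b ^ 2) / l)) := by
  have ha : 0 < a := hb.trans_le hba
  have hLsq : √(a ^ 2 + b ^ 2) ^ 2 = a ^ 2 + b ^ 2 := sq_sqrt (by positivity)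
  have haL : a ≤ √(a ^ 2 + b ^ 2) := (le_sqrt ha.le (by positivity)).2 (by nlinarith)
  have hl : 0 < l := ha.trans_le haL |>.trans hLl
  have hal : a ≤ l := haL.trans hLl.le
  have hc : Continuous fun ψ => S2 (l * sin ψ) a b := (continuous_S2 a b).comp (by fun_prop)
  rw [S3_eq_integral_S2,
    ← integral_add_adjacent_intervals (b := arcsin (b / l)) (hc.intervalIntegrable _ _)
      (hc.intervalIntegrable _ _),
    ← integral_add_adjacent_intervals (a := arcsin (b / l)) (b := arcsin (a / l))
      (hc.intervalIntegrable _ _) (hc.intervalIntegrable _ _),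
    ← integral_add_adjacent_intervals (a := arcsin (a / l)) (b := arcsin (√(a ^ 2 + b ^ 2) / l))
      (hc.intervalIntegrable _ _) (hc.intervalIntegrable _ _),
    integral_S2_mul_sin_below_b hl hb.le hba,
    integral_S2_mul_sin_between_b_a hl hb hba (hba.trans hal),
    integral_S2_mul_sin_between_a_diag hl hb hba hal,
    integral_S2_mul_sin_above_diag hl ha hb hLl.le,
    ← Faux_add (arcsin (b / l)) (arcsin (a / l)) (arcsin (√(a ^ 2 + b ^ 2) / l)),
    ← Gaux_add (arcsin (b / l)) (arcsin (a / l)) (arcsin (√(a ^ 2 + b ^ 2) / l)),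
    sin_arcsin_div hl hb.le (hba.trans hal), sin_arcsin_div hl ha.le hal,
    sin_arcsin_div hl (sqrt_nonneg _) hLl.le]
  simp only [cos_arcsin, div_pow, hLsq]
  field_simp
  ring
end

section
/- For fixed real numbers a, b with 0 < b ≤ a, the quantity S³ᴰ(l,a,b) tends to a·b·π²/2 as l → ∞; equivalently, the 3D needle intersection probability P³ᴰ(l,a,b) = S³ᴰ(l,a,b)/(a·b·π²/2) tends to 1 as l → ∞ (while remaining strictly below 1 for every finite l > 0). -/
open Real MeasureTheory Filter

/-!
Pointwise `b u + a v - u v = a b - (a - u) (b - v)`, where `u, v` are the two `min` terms, so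
`S3 l a b = a b π² / 2 - R l`, with `R l` the integral of the product of the non-negative "miss"
factors `a - u` and `b - v`. When `sin ψ sin φ > 0` the factor `b - v` vanishes once `l` is large,
so `R l → 0` by bounded convergence (applied to the inner and then to the outer integral). And
`R l > 0` for every `l`: at `ψ = 0` the projected needle is a point, the integrand is `a b`, and
the outer integrand is continuous and non-negative.
-/

open Topology Set Function
open scoped Interval

namespace intervalIntegral

variable {E : Type*} [NormedAddCommGroup E] [NormedSpace ℝ E] {f g : ℝ → ℝ → E}

theorem integral_integral_add (hf : Continuous (uncurry f)) (hg : Continuous (uncurry g))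
    (a b c d : ℝ) :
    ∫ x in a..b, ∫ y in c..d, (f x y + g x y) =
      (∫ x in a..b, ∫ y in c..d, f x y) + ∫ x in a..b, ∫ y in c..d, g x y := by
  simp_rw [integral_add ((hf.uncurry_left _).intervalIntegrable c d)
    ((hg.uncurry_left _).intervalIntegrable c d)]
  exact integral_add
    ((continuous_parametric_intervalIntegral_of_continuous' hf c d).intervalIntegrable a b)
    ((continuous_parametric_intervalIntegral_of_continuous' hg c d).intervalIntegrable a b)

theorem integral_integral_sub (hf : Continuous (uncurry f)) (hg : Continuous (uncurry g))
    (a b c d : ℝ) :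
    ∫ x in a..b, ∫ y in c..d, (f x y - g x y) =
      (∫ x in a..b, ∫ y in c..d, f x y) - ∫ x in a..b, ∫ y in c..d, g x y := by
  simp_rw [integral_sub ((hf.uncurry_left _).intervalIntegrable c d)
    ((hg.uncurry_left _).intervalIntegrable c d)]
  exact integral_sub
    ((continuous_parametric_intervalIntegral_of_continuous' hf c d).intervalIntegrable a b)
    ((continuous_parametric_intervalIntegral_of_continuous' hg c d).intervalIntegrable a b)

theorem tendsto_integral_filter_of_norm_le_const {ι : Type*} {L : Filter ι}
    [L.IsCountablyGenerated] {F : ι → ℝ → E} {f : ℝ → E} {a b C : ℝ} (hab : a ≤ b)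
    (hF : ∀ i, Continuous (F i))
    (h_bound : ∀ᶠ i in L, ∀ x ∈ Ioo a b, ‖F i x‖ ≤ C)
    (h_lim : ∀ x ∈ Ioo a b, Tendsto (F · x) L (𝓝 (f x))) :
    Tendsto (fun i => ∫ x in a..b, F i x) L (𝓝 (∫ x in a..b, f x)) := by
  have h_Ioo : ∀ᵐ x, x ∈ Ι a b → x ∈ Ioo a b := by
    filter_upwards [(Ioo_ae_eq_Ioc (μ := volume) (a := a) (b := b)).symm.le] with x hx hxab
    exact hx (uIoc_of_le hab ▸ hxab)
  refine tendsto_integral_filter_of_dominated_convergence (fun _ => C)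
    (.of_forall fun i => (hF i).aestronglyMeasurable) ?_ intervalIntegrable_const ?_
  · filter_upwards [h_bound] with i hi
    filter_upwards [h_Ioo] with x hx hxab using hi x (hx hxab)
  · filter_upwards [h_Ioo] with x hx hxab using h_lim x (hx hxab)

end intervalIntegral

namespace Buffon3D

noncomputable def missIntegrand (l a b ψ φ : ℝ) : ℝ :=
  (a - min a (l * sin ψ * |cos φ|)) * (b - min b (l * sin ψ * sin φ))

noncomputable def missIntegral (l a b : ℝ) : ℝ :=
  ∫ ψ in (0:ℝ)..(π/2), ∫ φ in (0:ℝ)..π, missIntegrand l a b ψ φ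

theorem S3_add_missIntegral (l a b : ℝ) : S3 l a b + missIntegral l a b = a * b * π ^ 2 / 2 := by
  calc S3 l a b + missIntegral l a b
      = (∫ ψ in (0:ℝ)..(π/2), ∫ φ in (0:ℝ)..π,
          (b * min a (l * sin ψ * |cos φ|) + a * min b (l * sin ψ * sin φ)
            - min a (l * sin ψ * |cos φ|) * min b (l * sin ψ * sin φ)))
        + missIntegral l a b := by
        rw [intervalIntegral.integral_integral_sub (by fun_prop) (by fun_prop),
          intervalIntegral.integral_integral_add (by fun_prop) (by fun_prop)]
        simp only [intervalIntegral.integral_const_mul]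
        rfl
    _ = ∫ ψ in (0:ℝ)..(π/2), ∫ φ in (0:ℝ)..π, a * b := by
        rw [missIntegral, ← intervalIntegral.integral_integral_add (by fun_prop)
          (by unfold missIntegrand; fun_prop)]
        refine intervalIntegral.integral_congr fun ψ _ =>
          intervalIntegral.integral_congr fun φ _ => ?_
        simp only [missIntegrand]
        ring
    _ = a * b * π ^ 2 / 2 := by
        simp only [intervalIntegral.integral_const, smul_eq_mul]
        ring

theorem continuous_missIntegrand (l a b : ℝ) : Continuous (uncurry (missIntegrand l a b)) := by
  unfold missIntegrand
  fun_prop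

theorem missIntegrand_nonneg (l a b ψ φ : ℝ) : 0 ≤ missIntegrand l a b ψ φ :=
  mul_nonneg (sub_nonneg.2 (min_le_left _ _)) (sub_nonneg.2 (min_le_left _ _))

theorem missIntegrand_le {l a b ψ φ : ℝ} (ha : 0 ≤ a) (hb : 0 ≤ b) (hψ : 0 ≤ l * sin ψ)
    (hφ : 0 ≤ sin φ) : missIntegrand l a b ψ φ ≤ a * b :=
  mul_le_mul (sub_le_self _ (le_min ha (by positivity))) (sub_le_self _ (le_min hb (by positivity)))
    (sub_nonneg.2 (min_le_left _ _)) ha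

theorem missIntegrand_eventually_eq_zero (a : ℝ) {b ψ φ : ℝ} (hψ : 0 < sin ψ)
    (hφ : 0 < sin φ) :
    ∀ᶠ l in atTop, missIntegrand l a b ψ φ = 0 := by
  have h_top : Tendsto (fun l => l * sin ψ * sin φ) atTop atTop := by
    simpa only [mul_assoc, id] using tendsto_id.atTop_mul_const (mul_pos hψ hφ)
  filter_upwards [h_top.eventually_ge_atTop b] with l hl
  simp [missIntegrand, min_eq_left hl]

theorem tendsto_integral_missIntegrand_atTop {a b ψ : ℝ} (ha : 0 ≤ a) (hb : 0 ≤ b)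
    (hψ : 0 < sin ψ) :
    Tendsto (fun l => ∫ φ in (0:ℝ)..π, missIntegrand l a b ψ φ) atTop (𝓝 0) := by
  have h_sin : ∀ φ ∈ Ioo 0 π, 0 < sin φ := fun φ hφ => sin_pos_of_pos_of_lt_pi hφ.1 hφ.2
  simpa using intervalIntegral.tendsto_integral_filter_of_norm_le_const (C := a * b) pi_pos.le
    (fun l => (continuous_missIntegrand l a b).uncurry_left ψ)
    (by
      filter_upwards [eventually_ge_atTop 0] with l hl φ hφ
      rw [norm_of_nonneg (missIntegrand_nonneg ..)]
      exact missIntegrand_le ha hb (mul_nonneg hl hψ.le) (h_sin φ hφ).le)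
    (fun φ hφ => tendsto_const_nhds.congr'
      ((missIntegrand_eventually_eq_zero a hψ (h_sin φ hφ)).mono fun _ h => h.symm))

theorem tendsto_missIntegral_atTop {a b : ℝ} (ha : 0 ≤ a) (hb : 0 ≤ b) :
    Tendsto (fun l => missIntegral l a b) atTop (𝓝 0) := by
  have h_sin : ∀ ψ ∈ Ioo 0 (π / 2), 0 < sin ψ := fun ψ hψ =>
    sin_pos_of_pos_of_lt_pi hψ.1 (hψ.2.trans (by linarith [pi_pos]))
  simpa [missIntegral] using intervalIntegral.tendsto_integral_filter_of_norm_le_const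
    (C := a * b * π) (by positivity)
    (fun l => intervalIntegral.continuous_parametric_intervalIntegral_of_continuous'
      (continuous_missIntegrand l a b) 0 π)
    (by
      filter_upwards [eventually_ge_atTop 0] with l hl ψ hψ
      rw [norm_of_nonneg (intervalIntegral.integral_nonneg pi_pos.le
        fun φ _ => missIntegrand_nonneg ..)]
      calc ∫ φ in (0:ℝ)..π, missIntegrand l a b ψ φ ≤ ∫ φ in (0:ℝ)..π, a * b :=
            intervalIntegral.integral_mono_on pi_pos.le
              (((continuous_missIntegrand l a b).uncurry_left ψ).intervalIntegrable 0 π)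
              intervalIntegrable_const fun φ hφ => missIntegrand_le ha hb
                (mul_nonneg hl (h_sin ψ hψ).le) (sin_nonneg_of_nonneg_of_le_pi hφ.1 hφ.2)
        _ = a * b * π := by simp only [intervalIntegral.integral_const, smul_eq_mul]; ring)
    (fun ψ hψ => tendsto_integral_missIntegrand_atTop ha hb (h_sin ψ hψ))

theorem missIntegral_pos (l : ℝ) {a b : ℝ} (ha : 0 < a) (hb : 0 < b) :
    0 < missIntegral l a b := by
  refine intervalIntegral.integral_pos (by positivity)
    (intervalIntegral.continuous_parametric_intervalIntegral_of_continuous'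
      (continuous_missIntegrand l a b) 0 π).continuousOn
    (fun ψ _ => intervalIntegral.integral_nonneg pi_pos.le fun φ _ => missIntegrand_nonneg ..)
    ⟨0, left_mem_Icc.2 (by positivity), ?_⟩
  simp only [missIntegrand, sin_zero, mul_zero, zero_mul, inf_of_le_right ha.le,
    inf_of_le_right hb.le, sub_zero, intervalIntegral.integral_const_mul,
    intervalIntegral.integral_const, smul_eq_mul]
  positivity

end Buffon3D

open Buffon3D in
theorem stmt19 (a b : ℝ) (hb : 0 < b) (hba : b ≤ a) :
    Filter.Tendsto (fun l : ℝ => S3 l a b) Filter.atTop (nhds (a * b * π ^ 2 / 2))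
      ∧ Filter.Tendsto (fun l : ℝ => S3 l a b / (a * b * π ^ 2 / 2))
          Filter.atTop (nhds 1)
      ∧ ∀ l : ℝ, 0 < l → S3 l a b / (a * b * π ^ 2 / 2) < 1 := by
  have ha : 0 < a := hb.trans_le hba
  have hc : 0 < a * b * π ^ 2 / 2 := by positivity
  have hS : ∀ l, S3 l a b = a * b * π ^ 2 / 2 - missIntegral l a b :=
    fun l => eq_sub_of_add_eq (S3_add_missIntegral l a b)
  have hlim : Tendsto (fun l => S3 l a b) atTop (𝓝 (a * b * π ^ 2 / 2)) := by
    simpa [hS] using tendsto_const_nhds.sub (tendsto_missIntegral_atTop ha.le hb.le)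
  have hlim_div := hlim.div_const (a * b * π ^ 2 / 2)
  rw [div_self hc.ne'] at hlim_div
  refine ⟨hlim, hlim_div, fun l _ => ?_⟩
  rw [div_lt_one hc, hS]
  linarith [missIntegral_pos l ha hb]
end
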